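/- Let f : ℕ → ℂ be multiplicative with f(p^a) = 0 for all primes p and all integers a ≥ 2. Then the function g(n) = (-1)^{Ω(n)} · ξ(n) · ∏_p f(p)^{ν_p(n)} is the binomial inverse of f, i.e., (f ∘ g)(n) = δ(n) for all positive integers n. -/

import Mathlib

/-- `ξ(n) = ∏_p ν_p(n)!`. -/
def xi (n : ℕ) : ℕ := ∏ p ∈ n.primeFactors, Nat.factorial (n.factorization p)

/-- `Ω(n) = ∑_p ν_p(n)`. -/
def bigOmega (n : ℕ) : ℕ := ∑ p ∈ n.primeFactors, n.factorization p

/-- `∏_p C(ν_p(n), ν_p(d))`. -/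
def binomCoeff (n d : ℕ) : ℕ :=
  ∏ p ∈ n.primeFactors, Nat.choose (n.factorization p) (d.factorization p)

/-- The binomial convolution. -/
noncomputable def bconv (f g : ℕ → ℂ) (n : ℕ) : ℂ :=
  ∑ d ∈ n.divisors, (binomCoeff n d : ℂ) * f d * g (n / d)

/-- `δ(1) = 1`, `δ(n) = 0` for `n > 1`. -/
def delta (n : ℕ) : ℂ := if n = 1 then 1 else 0

/-- Multiplicative arithmetical function. -/
def IsMult (f : ℕ → ℂ) : Prop :=
  f 1 = 1 ∧ ∀ m n : ℕ, 0 < m → 0 < n → Nat.Coprime m n → f (m * n) = f m * f n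

/-!
Dividing by `ξ` turns the binomial convolution into the Dirichlet convolution:
`(f ∘ g)(n) = ξ(n) · ((f/ξ) * (g/ξ))(n)`, because
`C(ν_p(n), ν_p(d)) · ν_p(d)! · ν_p(n/d)! = ν_p(n)!`.
For the given `g`, `g/ξ` is the completely multiplicative function with `(g/ξ)(p) = -f(p)`, and
`f/ξ` is multiplicative with `(f/ξ)(p) = f(p)` and `(f/ξ)(p^a) = 0` for `a ≥ 2`.
At a prime power `p^(k+1)` the Dirichlet convolution of the two therefore reduces to
`(-f(p))^(k+1) + f(p) · (-f(p))^k = 0`.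
-/

open ArithmeticFunction Finset
open scoped Nat

lemma Nat.prod_primeFactors_pow_factorization_mul {M : Type*} [CommMonoid M] (a : ℕ → M)
    {m n : ℕ} (hm : m ≠ 0) (hn : n ≠ 0) :
    ∏ p ∈ (m * n).primeFactors, a p ^ (m * n).factorization p =
      (∏ p ∈ m.primeFactors, a p ^ m.factorization p) *
        ∏ p ∈ n.primeFactors, a p ^ n.factorization p := by
  simp only [← Nat.prod_factorization_eq_prod_primeFactors]
  rw [Nat.factorization_mul hm hn]
  exact Finsupp.prod_add_index' (fun _ => pow_zero _) (fun _ => pow_add _)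

lemma bigOmega_eq_cardFactors (n : ℕ) : bigOmega n = cardFactors n :=
  cardFactors_eq_sum_factorization.symm

lemma xi_eq_prod_factorization (n : ℕ) : xi n = n.factorization.prod fun _ k => k ! := rfl

lemma xi_eq_prod_of_primeFactors_subset {n : ℕ} {s : Finset ℕ} (hs : n.primeFactors ⊆ s) :
    xi n = ∏ p ∈ s, (n.factorization p)! :=
  Finsupp.prod_of_support_subset _ (by rwa [Nat.support_factorization]) _ fun _ _ => rfl

lemma xi_ne_zero (n : ℕ) : xi n ≠ 0 :=
  prod_ne_zero_iff.2 fun _ _ => Nat.factorial_ne_zero _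

lemma xi_prime_pow {p : ℕ} (hp : p.Prime) (k : ℕ) : xi (p ^ k) = k ! := by
  rw [xi_eq_prod_factorization, hp.factorization_pow, Finsupp.prod_single_index rfl]

lemma xi_mul_of_coprime {m n : ℕ} (h : m.Coprime n) : xi (m * n) = xi m * xi n := by
  simp only [xi_eq_prod_factorization]
  rw [Nat.factorization_mul_of_coprime h, Finsupp.prod_add_index_of_disjoint]
  simpa using h.disjoint_primeFactors

lemma binomCoeff_mul_xi_mul_xi {n d : ℕ} (hn : n ≠ 0) (hd : d ∣ n) :
    binomCoeff n d * (xi d * xi (n / d)) = xi n := by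
  rw [xi_eq_prod_of_primeFactors_subset (Nat.primeFactors_mono hd hn),
    xi_eq_prod_of_primeFactors_subset (Nat.primeFactors_mono (Nat.div_dvd_of_dvd hd) hn), xi,
    binomCoeff, ← prod_mul_distrib, ← prod_mul_distrib]
  refine prod_congr rfl fun p _ => ?_
  rw [← mul_assoc, Nat.factorization_div hd, Finsupp.tsub_apply]
  exact Nat.choose_mul_factorial_mul_factorial
    ((Nat.factorization_le_iff_dvd (ne_zero_of_dvd_ne_zero hn hd) hn).2 hd p)

noncomputable def divXi (f : ℕ → ℂ) : ArithmeticFunction ℂ :=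
  ⟨fun n => if n = 0 then 0 else f n / xi n, if_pos rfl⟩

lemma divXi_apply (f : ℕ → ℂ) {n : ℕ} (hn : n ≠ 0) : divXi f n = f n / xi n := if_neg hn

lemma bconv_eq_xi_mul_divXi_mul_divXi (f g : ℕ → ℂ) {n : ℕ} (hn : n ≠ 0) :
    bconv f g n = xi n * (divXi f * divXi g) n := by
  rw [mul_apply, Nat.sum_divisorsAntidiagonal (fun a b => divXi f a * divXi g b), bconv, mul_sum]
  refine sum_congr rfl fun d hd => ?_
  have hdn : d ∣ n := Nat.dvd_of_mem_divisors hd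
  rw [divXi_apply f (ne_zero_of_dvd_ne_zero hn hdn),
    divXi_apply g (ne_zero_of_dvd_ne_zero hn (Nat.div_dvd_of_dvd hdn)),
    ← binomCoeff_mul_xi_mul_xi hn hdn]
  have := xi_ne_zero d
  have := xi_ne_zero (n / d)
  push_cast
  field_simp

lemma isMultiplicative_divXi {f : ℕ → ℂ} (hf : IsMult f) : (divXi f).IsMultiplicative := by
  refine ⟨by simp [divXi_apply, hf.1, xi], fun {m n} hmn => ?_⟩
  rcases eq_or_ne m 0 with rfl | hm
  · simp [divXi]
  rcases eq_or_ne n 0 with rfl | hn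
  · simp [divXi]
  rw [divXi_apply f (mul_ne_zero hm hn), divXi_apply f hm, divXi_apply f hn,
    hf.2 m n (Nat.pos_of_ne_zero hm) (Nat.pos_of_ne_zero hn) hmn, xi_mul_of_coprime hmn]
  push_cast
  field_simp

lemma divXi_prime {f : ℕ → ℂ} {p : ℕ} (hp : p.Prime) : divXi f p = f p := by
  have hxi : xi p = 1 := by simpa using xi_prime_pow hp 1
  rw [divXi_apply f hp.ne_zero, hxi, Nat.cast_one, div_one]

lemma divXi_eq_zero_of_eq_zero {f : ℕ → ℂ} {n : ℕ} (h : f n = 0) : divXi f n = 0 := by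
  rcases eq_or_ne n 0 with rfl | hn
  · rfl
  · rw [divXi_apply f hn, h, zero_div]

noncomputable def binomInverse (f : ℕ → ℂ) (n : ℕ) : ℂ :=
  (-1) ^ bigOmega n * xi n * ∏ p ∈ n.primeFactors, f p ^ n.factorization p

lemma isMult_binomInverse (f : ℕ → ℂ) : IsMult (binomInverse f) := by
  refine ⟨by simp [binomInverse, bigOmega, xi], fun m n hm hn hmn => ?_⟩
  simp only [binomInverse]
  rw [bigOmega_eq_cardFactors, bigOmega_eq_cardFactors, bigOmega_eq_cardFactors,
    cardFactors_mul hm.ne' hn.ne', xi_mul_of_coprime hmn,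
    Nat.prod_primeFactors_pow_factorization_mul f hm.ne' hn.ne']
  push_cast
  ring

lemma divXi_binomInverse_prime_pow (f : ℕ → ℂ) {p : ℕ} (hp : p.Prime) (k : ℕ) :
    divXi (binomInverse f) (p ^ k) = (-f p) ^ k := by
  rw [divXi_apply _ (pow_ne_zero k hp.ne_zero), binomInverse, bigOmega_eq_cardFactors,
    cardFactors_apply_prime_pow hp, xi_prime_pow hp,
    ← Nat.prod_factorization_eq_prod_primeFactors, hp.factorization_pow,
    Finsupp.prod_single_index (by simp)]
  have := k.factorial_ne_zero
  field_simp
  ring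

lemma divXi_mul_divXi_binomInverse {f : ℕ → ℂ} (hf : IsMult f)
    (hvan : ∀ p a : ℕ, p.Prime → 2 ≤ a → f (p ^ a) = 0) :
    divXi f * divXi (binomInverse f) = 1 := by
  have hmul := (isMultiplicative_divXi hf).mul (isMultiplicative_divXi (isMult_binomInverse f))
  refine (hmul.eq_iff_eq_on_prime_powers _ 1 isMultiplicative_one).2 fun p i hp => ?_
  obtain _ | k := i
  · simp [hmul.map_one]
  rw [one_apply_ne (Nat.one_lt_pow k.succ_ne_zero hp.one_lt).ne', mul_apply,
    Nat.sum_divisorsAntidiagonal (fun a b => divXi f a * divXi (binomInverse f) b),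
    Nat.sum_divisors_prime_pow hp, sum_range_succ', sum_range_succ']
  have higher_terms_vanish : ∑ j ∈ range k,
      divXi f (p ^ (j + 1 + 1)) * divXi (binomInverse f) (p ^ (k + 1) / p ^ (j + 1 + 1)) = 0 :=
    sum_eq_zero fun j _ => by rw [divXi_eq_zero_of_eq_zero (hvan p _ hp (by omega)), zero_mul]
  rw [higher_terms_vanish, zero_add, zero_add, pow_zero, Nat.div_one, pow_one,
    Nat.div_eq_of_eq_mul_left hp.pos (pow_succ p k), (isMultiplicative_divXi hf).map_one,
    divXi_prime hp, divXi_binomInverse_prime_pow f hp, divXi_binomInverse_prime_pow f hp]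
  ring

/-- If `f` is multiplicative with `f(p^a) = 0` for all primes `p` and all `a ≥ 2`, then
`g(n) = (-1)^{Ω(n)}·ξ(n)·∏_p f(p)^{ν_p(n)}` is the binomial inverse of `f`. -/
theorem binomial_inverse_of_vanishing_on_higher_prime_powers
    (f : ℕ → ℂ) (hf : IsMult f)
    (hvan : ∀ p a : ℕ, p.Prime → 2 ≤ a → f (p ^ a) = 0) :
    ∀ n : ℕ, 0 < n →
      bconv f
        (fun m => (-1 : ℂ) ^ bigOmega m * (xi m : ℂ) *
          ∏ p ∈ m.primeFactors, f p ^ m.factorization p) n = delta n := by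
  intro n hn
  change bconv f (binomInverse f) n = delta n
  rw [bconv_eq_xi_mul_divXi_mul_divXi f _ hn.ne', divXi_mul_divXi_binomInverse hf hvan,
    one_apply, delta]
  split_ifs with h
  · simp [h, xi]
  · rw [mul_zero]
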